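/- arXiv:2209.13044 — 2 statements merged into one kernel-verified Lean document; each statement's English description precedes it below -/
import Mathlib

section
/- Suppose the matrix γ = Σ_{m=0}^{d} c_m·Â^m (a polynomial in Â with complex coefficients c_m) satisfies the first master equation of the linear (x-independent) Poisson gauge theory: Σ_i (γ^j_i·∂^i_A γ^k_l − γ^k_i·∂^i_A γ^j_l) = Σ_i γ^i_l·f^{jk}_i for all j,k,l. Define σ = γ − i·Â. Then σ satisfies Σ_i (γ^k_i·∂^i_A σ^j_l − σ^j_i·∂^i_A γ^k_l) = 0 for all j,k,l. (This is the statement that ρ with ρ^{−1} = γ − iÂ is a universal solution of the second master equation for any Lie-Poisson bivector Θ^{ab} = f^{ab}_c x^c.) -/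
open MvPolynomial

section aux

variable {n : ℕ} {f : Fin n → Fin n → Fin n → ℂ}

private lemma key_scalar
    (hanti : ∀ a b c, f a b c = - f b a c)
    (hjac : ∀ i j k a, ∑ l, (f k l i * f j a l + f j l i * f a k l + f a l i * f k j l) = 0)
    (a b c j : Fin n) :
    ∑ i, f a j i * f i b c = ∑ i, (f j b i * f a i c - f a b i * f j i c) := by
  have h := hjac c a b j
  rw [← sub_eq_zero, ← Finset.sum_sub_distrib]
  have e : ∀ l, f a j l * f l b c - (f j b l * f a l c - f a b l * f j l c)
      = -(f b l c * f a j l + f a l c * f j b l + f j l c * f b a l) := fun l => by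
    rw [hanti l b c, hanti b a l]; ring
  rw [Finset.sum_congr rfl fun l _ => e l, Finset.sum_neg_distrib, h, neg_zero]

private noncomputable def Dop (f : Fin n → Fin n → Fin n → ℂ) (j : Fin n)
    (M : Matrix (Fin n) (Fin n) (MvPolynomial (Fin n) ℂ)) :
    Matrix (Fin n) (Fin n) (MvPolynomial (Fin n) ℂ) :=
  fun k l => ∑ i, (∑ a, C (f a j i) * X a) * pderiv i (M k l)

private lemma Dop_mul (j : Fin n) (M N : Matrix (Fin n) (Fin n) (MvPolynomial (Fin n) ℂ)) :
    Dop f j (M * N) = Dop f j M * N + M * Dop f j N := by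
  funext k l
  simp only [Dop, Matrix.mul_apply, Matrix.add_apply, map_sum, Derivation.leibniz,
    smul_eq_mul, Finset.mul_sum, Finset.sum_mul, mul_add]
  rw [Finset.sum_comm, ← Finset.sum_add_distrib]
  refine Finset.sum_congr rfl fun m _ => ?_
  rw [← Finset.sum_add_distrib]
  refine Finset.sum_congr rfl fun i _ => ?_
  rw [← Finset.sum_add_distrib, ← Finset.sum_add_distrib]
  exact Finset.sum_congr rfl fun x _ => by ring

private lemma Dop_one (j : Fin n) :
    Dop f j (1 : Matrix (Fin n) (Fin n) (MvPolynomial (Fin n) ℂ)) = 0 := by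
  funext k l
  simp [Dop, Matrix.one_apply, apply_ite (pderiv _), pderiv_one]

private lemma Dop_add (j : Fin n) (M N : Matrix (Fin n) (Fin n) (MvPolynomial (Fin n) ℂ)) :
    Dop f j (M + N) = Dop f j M + Dop f j N := by
  funext k l
  simp [Dop, Matrix.add_apply, map_add, mul_add, Finset.sum_add_distrib]

private lemma Dop_zero (j : Fin n) :
    Dop f j (0 : Matrix (Fin n) (Fin n) (MvPolynomial (Fin n) ℂ)) = 0 := by
  funext k l
  simp [Dop]

private lemma Dop_smul (j : Fin n) (q : ℂ)
    (M : Matrix (Fin n) (Fin n) (MvPolynomial (Fin n) ℂ)) :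
    Dop f j ((C q : MvPolynomial (Fin n) ℂ) • M) = (C q : MvPolynomial (Fin n) ℂ) • Dop f j M := by
  funext k l
  simp [Dop, Matrix.smul_apply, smul_eq_mul, Derivation.leibniz, pderiv_C,
    Finset.mul_sum, mul_left_comm]

private lemma Dop_sum (j : Fin n) {α : Type*} (s : Finset α)
    (g : α → Matrix (Fin n) (Fin n) (MvPolynomial (Fin n) ℂ)) :
    Dop f j (∑ m ∈ s, g m) = ∑ m ∈ s, Dop f j (g m) := by
  induction s using Finset.cons_induction with
  | empty => simp [Dop_zero]
  | cons a s ha ih => rw [Finset.sum_cons, Dop_add, ih, Finset.sum_cons]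

private lemma pderiv_Ahat
    (Ahat : Matrix (Fin n) (Fin n) (MvPolynomial (Fin n) ℂ))
    (hA : ∀ b c, Ahat b c = ∑ a, MvPolynomial.C (-Complex.I * f a b c) * MvPolynomial.X a)
    (i b c : Fin n) :
    pderiv i (Ahat b c) = C (-Complex.I * f i b c) := by
  rw [hA, map_sum]
  simp [Derivation.leibniz, pderiv_C, pderiv_X, Pi.single_apply, Finset.sum_ite_eq']

private lemma Dop_Ahat
    (hanti : ∀ a b c, f a b c = - f b a c)
    (hjac : ∀ i j k a, ∑ l, (f k l i * f j a l + f j l i * f a k l + f a l i * f k j l) = 0)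
    (Ahat : Matrix (Fin n) (Fin n) (MvPolynomial (Fin n) ℂ))
    (hA : ∀ b c, Ahat b c = ∑ a, MvPolynomial.C (-Complex.I * f a b c) * MvPolynomial.X a)
    (j : Fin n) :
    Dop f j Ahat
      = Matrix.of (fun b c => (C (f j b c) : MvPolynomial (Fin n) ℂ)) * Ahat
        - Ahat * Matrix.of (fun b c => (C (f j b c) : MvPolynomial (Fin n) ℂ)) := by
  have hd := pderiv_Ahat Ahat hA
  funext b c
  simp only [Dop, Matrix.sub_apply, Matrix.mul_apply, Matrix.of_apply, hd]
  simp only [hA, Finset.sum_mul, Finset.mul_sum]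
  rw [Finset.sum_comm]
  conv_rhs => enter [1]; rw [Finset.sum_comm]
  conv_rhs => enter [2]; rw [Finset.sum_comm]
  rw [← Finset.sum_sub_distrib]
  refine Finset.sum_congr rfl fun a _ => ?_
  trans (C (-Complex.I) * C (∑ i, f a j i * f i b c) * X a)
  · rw [map_sum, Finset.mul_sum, Finset.sum_mul]
    exact Finset.sum_congr rfl fun i _ => by simp only [map_mul, map_neg]; ring
  · rw [key_scalar hanti hjac a b c j, map_sum, Finset.mul_sum, Finset.sum_mul,
      ← Finset.sum_sub_distrib]
    exact Finset.sum_congr rfl fun m _ => by simp only [map_sub, map_mul, map_neg]; ring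

private lemma Dop_pow
    (hanti : ∀ a b c, f a b c = - f b a c)
    (hjac : ∀ i j k a, ∑ l, (f k l i * f j a l + f j l i * f a k l + f a l i * f k j l) = 0)
    (Ahat : Matrix (Fin n) (Fin n) (MvPolynomial (Fin n) ℂ))
    (hA : ∀ b c, Ahat b c = ∑ a, MvPolynomial.C (-Complex.I * f a b c) * MvPolynomial.X a)
    (j : Fin n) (m : ℕ) :
    Dop f j (Ahat ^ m)
      = Matrix.of (fun b c => (C (f j b c) : MvPolynomial (Fin n) ℂ)) * Ahat ^ m
        - Ahat ^ m * Matrix.of (fun b c => (C (f j b c) : MvPolynomial (Fin n) ℂ)) := by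
  induction m with
  | zero => simp [Dop_one]
  | succ m ih =>
      rw [pow_succ, Dop_mul, ih, Dop_Ahat hanti hjac Ahat hA j]
      noncomm_ring

private lemma Dop_gamma
    (hanti : ∀ a b c, f a b c = - f b a c)
    (hjac : ∀ i j k a, ∑ l, (f k l i * f j a l + f j l i * f a k l + f a l i * f k j l) = 0)
    (Ahat : Matrix (Fin n) (Fin n) (MvPolynomial (Fin n) ℂ))
    (hA : ∀ b c, Ahat b c = ∑ a, MvPolynomial.C (-Complex.I * f a b c) * MvPolynomial.X a)
    (d : ℕ) (c : ℕ → ℂ)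
    (γ : Matrix (Fin n) (Fin n) (MvPolynomial (Fin n) ℂ))
    (hγ : γ = ∑ m ∈ Finset.range (d + 1),
      (MvPolynomial.C (c m) : MvPolynomial (Fin n) ℂ) • Ahat ^ m)
    (j : Fin n) :
    Dop f j γ
      = Matrix.of (fun b c => (C (f j b c) : MvPolynomial (Fin n) ℂ)) * γ
        - γ * Matrix.of (fun b c => (C (f j b c) : MvPolynomial (Fin n) ℂ)) := by
  rw [hγ, Dop_sum]
  simp only [Dop_smul, Dop_pow hanti hjac Ahat hA j, smul_sub, Finset.sum_sub_distrib,
    Finset.mul_sum, Finset.sum_mul, mul_smul_comm, smul_mul_assoc]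

end aux

/-- If `γ = Σ_{m=0}^d c_m Â^m` satisfies the first master equation of the
linear Poisson gauge theory, then `σ = γ - iÂ` satisfies
`Σ_i (γ^k_i ∂^i_A σ^j_l - σ^j_i ∂^i_A γ^k_l) = 0`, i.e. `ρ` with `ρ⁻¹ = γ - iÂ` is a
universal solution of the second master equation for any Lie-Poisson bivector. -/
theorem universal_rho_solution (n : ℕ) (f : Fin n → Fin n → Fin n → ℂ)
    (hanti : ∀ a b c, f a b c = - f b a c)
    (hjac : ∀ i j k a, ∑ l, (f k l i * f j a l + f j l i * f a k l + f a l i * f k j l) = 0)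
    (Ahat : Matrix (Fin n) (Fin n) (MvPolynomial (Fin n) ℂ))
    (hA : ∀ b c, Ahat b c = ∑ a, MvPolynomial.C (-Complex.I * f a b c) * MvPolynomial.X a)
    (d : ℕ) (c : ℕ → ℂ)
    (γ : Matrix (Fin n) (Fin n) (MvPolynomial (Fin n) ℂ))
    (hγ : γ = ∑ m ∈ Finset.range (d + 1), (MvPolynomial.C (c m) : MvPolynomial (Fin n) ℂ) • Ahat ^ m)
    (hmaster1 : ∀ j k l : Fin n,
      ∑ i, (γ j i * MvPolynomial.pderiv i (γ k l) - γ k i * MvPolynomial.pderiv i (γ j l)) =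
        ∑ i, γ i l * MvPolynomial.C (f j k i))
    (σ : Matrix (Fin n) (Fin n) (MvPolynomial (Fin n) ℂ))
    (hσ : σ = γ - (MvPolynomial.C Complex.I : MvPolynomial (Fin n) ℂ) • Ahat) :
    ∀ j k l : Fin n,
      ∑ i, (γ k i * MvPolynomial.pderiv i (σ j l) - σ j i * MvPolynomial.pderiv i (γ k l)) = 0 := by
  intro j k l
  have hd := pderiv_Ahat Ahat hA
  -- pderiv of σ
  have hps : ∀ i : Fin n, pderiv i (σ j l) = pderiv i (γ j l) - C (f i j l) := by
    intro i
    rw [hσ]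
    simp only [Matrix.sub_apply, Matrix.smul_apply, smul_eq_mul, map_sub, Derivation.leibniz,
      pderiv_C, hd, smul_eq_mul, mul_zero, add_zero]
    rw [← C_mul, show Complex.I * (-Complex.I * f i j l) = f i j l by
      linear_combination (-f i j l) * Complex.I_mul_I]
  -- entries of σ
  have hsA : ∀ i : Fin n, σ j i = γ j i - ∑ a, C (f a j i) * X a := by
    intro i
    rw [hσ]
    simp only [Matrix.sub_apply, Matrix.smul_apply, smul_eq_mul, hA, Finset.mul_sum]
    congr 1
    refine Finset.sum_congr rfl fun a _ => ?_
    rw [← mul_assoc, ← C_mul, show Complex.I * (-Complex.I * f a j i) = f a j i by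
      linear_combination (-f a j i) * Complex.I_mul_I]
  -- the Dop identity, entrywise
  have hDγ : ∑ i, (∑ a, C (f a j i) * X a) * pderiv i (γ k l)
      = ∑ i, C (f j k i) * γ i l - ∑ i, γ k i * C (f j i l) := by
    have h := congrFun (congrFun (Dop_gamma hanti hjac Ahat hA d c γ hγ j) k) l
    simpa [Dop, Matrix.sub_apply, Matrix.mul_apply, Matrix.of_apply] using h
  calc ∑ i, (γ k i * MvPolynomial.pderiv i (σ j l) - σ j i * MvPolynomial.pderiv i (γ k l))
      = (∑ i, (γ k i * pderiv i (γ j l) - γ j i * pderiv i (γ k l)))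
        - (∑ i, γ k i * C (f i j l))
        + ∑ i, (∑ a, C (f a j i) * X a) * pderiv i (γ k l) := by
        rw [← Finset.sum_sub_distrib, ← Finset.sum_add_distrib]
        refine Finset.sum_congr rfl fun i _ => ?_
        rw [hps i, hsA i]
        ring
    _ = (∑ i, γ i l * C (f k j i)) - (∑ i, γ k i * C (f i j l))
        + (∑ i, C (f j k i) * γ i l - ∑ i, γ k i * C (f j i l)) := by
        rw [hmaster1 k j l, hDγ]
    _ = 0 := by
        have h1 : ∑ i, γ i l * C (f k j i) = - ∑ i, C (f j k i) * γ i l := by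
          rw [← Finset.sum_neg_distrib]
          exact Finset.sum_congr rfl fun i _ => by rw [hanti k j i, map_neg]; ring
        have h2 : ∑ i, γ k i * C (f i j l) = - ∑ i, γ k i * C (f j i l) := by
          rw [← Finset.sum_neg_distrib]
          exact Finset.sum_congr rfl fun i _ => by rw [hanti i j l, map_neg]; ring
        rw [h1, h2]; ring
end

section
/- Fix N ∈ ℕ and ω ∈ ℝᴺ, with κ-Minkowski structure constants f^{aj}_k = 2(ω^a·δ^j_k − ω^j·δ^a_k). On the open set U = {A ∈ ℝᴺ : ω·A ≠ 0} define γ^i_j(A) = (ω·A)·(1 + coth(ω·A))·δ^i_j + ((1 − (ω·A) − (ω·A)·coth(ω·A))/(ω·A))·ω^i·A_j and ρ^i_j(A) = ((exp(2(ω·A)) − 1)/(2(ω·A)))·δ^i_j + ((1 + 2(ω·A) − exp(2(ω·A)))/(2(ω·A)²))·ω^i·A_j. Then ρ is differentiable on U and satisfies the second master equation of the linear Poisson gauge theory at every point of U: Σ_l (γ^j_l(A)·∂^l_A ρ^i_a(A) + ρ^l_a(A)·∂^i_A γ^j_l(A)) = 0 for all i,j,a. -/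
/-!
Both matrices have the form `M^i_j(A) = P(ω·A) δ^i_j + Q(ω·A) ω^i A_j`. For a pair of such
matrices the left-hand side of the second master equation collapses to a combination of the
three tensors `ω_j δ^i_a`, `ω^i δ_{ja}` and `ω^i ω_j A_a`, whose coefficients are first-order
differential expressions in the scalar functions, evaluated at `x = ω·A`. For the κ-Minkowski
choice these three expressions vanish identically: writing `coth x` and `sinh⁻² x` through
`e^{2x}` turns each of them into a rational identity in `x` and `e^{2x}`.
-/

/-- Partial derivative with respect to the `i`-th coordinate of a real-valued function
of `A ∈ ℝᴺ`. -/
noncomputable def pd {N : ℕ} (i : Fin N) (g : (Fin N → ℝ) → ℝ) (A : Fin N → ℝ) : ℝ :=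
  fderiv ℝ g A (Pi.single i 1)

open Real

section LinearAnsatz

variable {ι : Type*} [Fintype ι] [DecidableEq ι]

def linearAnsatz (ω : ι → ℝ) (P Q : ℝ → ℝ) (A : ι → ℝ) (i j : ι) : ℝ :=
  P (ω ⬝ᵥ A) * (if i = j then 1 else 0) + Q (ω ⬝ᵥ A) * ω i * A j

variable {ω A : ι → ℝ} {P Q : ℝ → ℝ}

theorem hasFDerivAt_linearAnsatz (hP : DifferentiableAt ℝ P (ω ⬝ᵥ A))
    (hQ : DifferentiableAt ℝ Q (ω ⬝ᵥ A)) (i j : ι) :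
    HasFDerivAt (linearAnsatz ω P Q · i j)
      (((if i = j then 1 else 0) * deriv P (ω ⬝ᵥ A) + deriv Q (ω ⬝ᵥ A) * ω i * A j) •
          LinearMap.toContinuousLinearMap (dotProductBilin ℝ ℝ ω)
        + (Q (ω ⬝ᵥ A) * ω i) • ContinuousLinearMap.proj j) A := by
  have hD := (LinearMap.toContinuousLinearMap (dotProductBilin ℝ ℝ ω)).hasFDerivAt (x := A)
  refine (((hP.hasDerivAt.comp_hasFDerivAt A hD).mul_const (if i = j then (1 : ℝ) else 0)).add
    (((hQ.hasDerivAt.comp_hasFDerivAt A hD).mul_const (ω i)).mul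
      (hasFDerivAt_apply j A))).congr_fderiv ?_
  ext v
  simp only [Function.comp_apply, add_apply, smul_apply, LinearMap.coe_toContinuousLinearMap',
    dotProductBilin_apply_apply, smul_eq_mul, ContinuousLinearMap.proj_apply]
  ring

theorem sum_row_linearAnsatz_mul (v : ι → ℝ) (j : ι) :
    ∑ l, linearAnsatz ω P Q A j l * v l = P (ω ⬝ᵥ A) * v j + Q (ω ⬝ᵥ A) * ω j * (A ⬝ᵥ v) := by
  simp only [linearAnsatz, add_mul, Finset.sum_add_distrib, mul_ite, mul_one, mul_zero, ite_mul,
    zero_mul, Finset.sum_ite_eq, Finset.mem_univ, if_true, dotProduct, Finset.mul_sum, mul_assoc]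

theorem sum_col_linearAnsatz_mul (v : ι → ℝ) (a : ι) :
    ∑ l, linearAnsatz ω P Q A l a * v l = P (ω ⬝ᵥ A) * v a + Q (ω ⬝ᵥ A) * A a * (ω ⬝ᵥ v) := by
  simp only [linearAnsatz, add_mul, Finset.sum_add_distrib, mul_ite, mul_one, mul_zero, ite_mul,
    zero_mul, Finset.sum_ite_eq', Finset.mem_univ, if_true, dotProduct, Finset.mul_sum]
  exact congrArg _ (Finset.sum_congr rfl fun l _ => by ring)

end LinearAnsatz

section SecondMaster

variable {N : ℕ} {ω A : Fin N → ℝ} {P Q F G : ℝ → ℝ}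

theorem pd_linearAnsatz (hP : DifferentiableAt ℝ P (ω ⬝ᵥ A))
    (hQ : DifferentiableAt ℝ Q (ω ⬝ᵥ A)) (l i j : Fin N) :
    pd l (linearAnsatz ω P Q · i j) A =
      deriv P (ω ⬝ᵥ A) * ω l * (if i = j then 1 else 0) + deriv Q (ω ⬝ᵥ A) * ω l * ω i * A j
        + Q (ω ⬝ᵥ A) * ω i * (if j = l then 1 else 0) := by
  rw [pd, (hasFDerivAt_linearAnsatz hP hQ i j).fderiv]
  simp only [add_apply, smul_apply, LinearMap.coe_toContinuousLinearMap',
    dotProductBilin_apply_apply, dotProduct_single, smul_eq_mul, ContinuousLinearMap.proj_apply,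
    Pi.single_apply, mul_one]
  ring

/-- `h₁`, `h₂`, `h₃` are the coefficients of `ω_j δ^i_a`, `ω^i δ_{ja}` and `ω^i ω_j A_a` in the
second master equation for `γ = (P, Q)` and `ρ = (F, G)`. -/
theorem secondMaster_linearAnsatz {x : ℝ} (hx : ω ⬝ᵥ A = x)
    (hP : DifferentiableAt ℝ P x) (hQ : DifferentiableAt ℝ Q x)
    (hF : DifferentiableAt ℝ F x) (hG : DifferentiableAt ℝ G x)
    (h₁ : (P x + x * Q x) * deriv F x + F x * Q x = 0)
    (h₂ : P x * G x + F x * deriv P x = 0)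
    (h₃ : (P x + x * Q x) * deriv G x + G x * (deriv P x + x * deriv Q x)
      + 2 * Q x * G x + F x * deriv Q x = 0)
    (i j a : Fin N) :
    ∑ l, (linearAnsatz ω P Q A j l * pd l (linearAnsatz ω F G · i a) A
      + linearAnsatz ω F G A l a * pd i (linearAnsatz ω P Q · j l) A) = 0 := by
  subst hx
  have gradρ : (fun l => pd l (linearAnsatz ω F G · i a) A)
      = (deriv F (ω ⬝ᵥ A) * (if i = a then 1 else 0) + deriv G (ω ⬝ᵥ A) * ω i * A a) • ω
        + (G (ω ⬝ᵥ A) * ω i) • Pi.single a 1 := by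
    funext l
    rw [pd_linearAnsatz hF hG]
    simp only [Pi.add_apply, Pi.smul_apply, Pi.single_apply, smul_eq_mul, @eq_comm (Fin N)]
    ring
  have pdγ : (fun l => pd i (linearAnsatz ω P Q · j l) A)
      = (deriv P (ω ⬝ᵥ A) * ω i) • Pi.single j 1 + (deriv Q (ω ⬝ᵥ A) * ω i * ω j) • A
        + (Q (ω ⬝ᵥ A) * ω j) • Pi.single i 1 := by
    funext l
    rw [pd_linearAnsatz hP hQ]
    simp only [Pi.add_apply, Pi.smul_apply, Pi.single_apply, smul_eq_mul, @eq_comm (Fin N)]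
  rw [Finset.sum_add_distrib, sum_row_linearAnsatz_mul, sum_col_linearAnsatz_mul, gradρ, pdγ,
    pd_linearAnsatz hF hG, pd_linearAnsatz hP hQ]
  simp only [dotProduct_add, dotProduct_smul, dotProduct_single, smul_eq_mul, dotProduct_comm A ω,
    mul_one, @eq_comm (Fin N)]
  linear_combination (ω j * (if i = a then 1 else 0)) * h₁
    + ((if j = a then 1 else 0) * ω i) * h₂ + (ω i * ω j * A a) * h₃

end SecondMaster

namespace Real

theorem cosh_div_sinh_eq (x : ℝ) : cosh x / sinh x = (exp (2 * x) + 1) / (exp (2 * x) - 1) := by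
  have := exp_ne_zero x
  rw [cosh_eq, sinh_eq, two_mul, exp_add, exp_neg]
  field_simp

theorem sinh_sq_eq_exp (x : ℝ) : sinh x ^ 2 = (exp (2 * x) - 1) ^ 2 / (4 * exp (2 * x)) := by
  have := exp_ne_zero x
  rw [sinh_eq, two_mul, exp_add, exp_neg]
  field_simp
  ring

theorem hasDerivAt_cosh_div_sinh {x : ℝ} (hx : x ≠ 0) :
    HasDerivAt (fun t => cosh t / sinh t) (-1 / sinh x ^ 2) x := by
  refine ((hasDerivAt_cosh x).div (hasDerivAt_sinh x) (sinh_ne_zero.2 hx)).congr_deriv ?_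
  rw [← cosh_sq_sub_sinh_sq x]
  ring

end Real

namespace KappaMinkowski

noncomputable def gammaDiag (t : ℝ) : ℝ := t * (1 + cosh t / sinh t)

noncomputable def gammaOuter (t : ℝ) : ℝ := (1 - t - t * (cosh t / sinh t)) / t

noncomputable def rhoDiag (t : ℝ) : ℝ := (exp (2 * t) - 1) / (2 * t)

noncomputable def rhoOuter (t : ℝ) : ℝ := (1 + 2 * t - exp (2 * t)) / (2 * t ^ 2)

theorem hasDerivAt_gammaDiag {x : ℝ} (hx : x ≠ 0) :
    HasDerivAt gammaDiag (1 + cosh x / sinh x - x / sinh x ^ 2) x := by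
  refine ((hasDerivAt_id x).mul ((hasDerivAt_cosh_div_sinh hx).const_add 1)).congr_deriv ?_
  simp only [id]
  ring

theorem hasDerivAt_gammaOuter {x : ℝ} (hx : x ≠ 0) :
    HasDerivAt gammaOuter (1 / sinh x ^ 2 - 1 / x ^ 2) x := by
  have hs : sinh x ≠ 0 := sinh_ne_zero.2 hx
  refine ((((hasDerivAt_const x 1).sub (hasDerivAt_id x)).sub
    ((hasDerivAt_id x).mul (hasDerivAt_cosh_div_sinh hx))).div (hasDerivAt_id x) hx).congr_deriv ?_
  simp only [Pi.sub_apply, Pi.mul_apply, id]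
  field_simp
  ring

theorem hasDerivAt_rhoDiag {x : ℝ} (hx : x ≠ 0) :
    HasDerivAt rhoDiag (exp (2 * x) / x - (exp (2 * x) - 1) / (2 * x ^ 2)) x := by
  have h2 : HasDerivAt (fun t : ℝ => 2 * t) 2 x := by simpa using (hasDerivAt_id x).const_mul 2
  refine ((h2.exp.sub_const 1).div h2 (by positivity)).congr_deriv ?_
  field_simp

theorem hasDerivAt_rhoOuter {x : ℝ} (hx : x ≠ 0) :
    HasDerivAt rhoOuter ((exp (2 * x) - 1 - x - exp (2 * x) * x) / x ^ 3) x := by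
  have h2 : HasDerivAt (fun t : ℝ => 2 * t) 2 x := by simpa using (hasDerivAt_id x).const_mul 2
  refine (((h2.const_add 1).sub h2.exp).div ((hasDerivAt_pow 2 x).const_mul 2)
    (by positivity)).congr_deriv ?_
  simp only [Pi.sub_apply]
  field_simp
  ring

theorem secondMaster_coefficients_eq_zero {x : ℝ} (hx : x ≠ 0) :
    (gammaDiag x + x * gammaOuter x) * deriv rhoDiag x + rhoDiag x * gammaOuter x = 0 ∧
    gammaDiag x * rhoOuter x + rhoDiag x * deriv gammaDiag x = 0 ∧
    (gammaDiag x + x * gammaOuter x) * deriv rhoOuter x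
      + rhoOuter x * (deriv gammaDiag x + x * deriv gammaOuter x)
      + 2 * gammaOuter x * rhoOuter x + rhoDiag x * deriv gammaOuter x = 0 := by
  rw [(hasDerivAt_gammaDiag hx).deriv, (hasDerivAt_gammaOuter hx).deriv,
    (hasDerivAt_rhoDiag hx).deriv, (hasDerivAt_rhoOuter hx).deriv]
  have hE : exp (2 * x) - 1 ≠ 0 := sub_ne_zero.2 (by simpa using hx)
  have hE' := exp_ne_zero (2 * x)
  simp only [gammaDiag, gammaOuter, rhoDiag, rhoOuter, cosh_div_sinh_eq, sinh_sq_eq_exp]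
  generalize exp (2 * x) = E at hE hE' ⊢
  refine ⟨?_, ?_, ?_⟩ <;> field_simp <;> ring

end KappaMinkowski

open KappaMinkowski

/-- For the κ-Minkowski matrices
`γ^i_j(A) = (ω·A)(1 + coth(ω·A)) δ^i_j + ((1 − (ω·A) − (ω·A)coth(ω·A))/(ω·A)) ω^i A_j` and
`ρ^i_j(A) = ((e^{2(ω·A)} − 1)/(2(ω·A))) δ^i_j + ((1 + 2(ω·A) − e^{2(ω·A)})/(2(ω·A)²)) ω^i A_j`,
`ρ` is differentiable on `U = {A : ω·A ≠ 0}` and satisfies the second master equation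
`Σ_l (γ^j_l ∂^l_A ρ^i_a + ρ^l_a ∂^i_A γ^j_l) = 0` at every point of `U`. -/
theorem kappa_minkowski_rho_second_master (N : ℕ) (ω : Fin N → ℝ)
    (γ : (Fin N → ℝ) → Fin N → Fin N → ℝ)
    (hγ : ∀ A i j, γ A i j =
      (∑ s, ω s * A s) *
          (1 + Real.cosh (∑ s, ω s * A s) / Real.sinh (∑ s, ω s * A s)) *
          (if i = j then 1 else 0)
      + ((1 - (∑ s, ω s * A s)
            - (∑ s, ω s * A s) * (Real.cosh (∑ s, ω s * A s) / Real.sinh (∑ s, ω s * A s)))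
          / (∑ s, ω s * A s)) * ω i * A j)
    (ρ : (Fin N → ℝ) → Fin N → Fin N → ℝ)
    (hρ : ∀ A i j, ρ A i j =
      ((Real.exp (2 * ∑ s, ω s * A s) - 1) / (2 * ∑ s, ω s * A s)) * (if i = j then 1 else 0)
      + ((1 + 2 * (∑ s, ω s * A s) - Real.exp (2 * ∑ s, ω s * A s))
          / (2 * (∑ s, ω s * A s) ^ 2)) * ω i * A j) :
    (∀ A : Fin N → ℝ, (∑ s, ω s * A s) ≠ 0 →
        ∀ i j, DifferentiableAt ℝ (fun B => ρ B i j) A) ∧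
    (∀ A : Fin N → ℝ, (∑ s, ω s * A s) ≠ 0 → ∀ i j a,
        ∑ l, (γ A j l * pd l (fun B => ρ B i a) A + ρ A l a * pd i (fun B => γ B j l) A)
          = 0) := by
  obtain rfl : γ = linearAnsatz ω gammaDiag gammaOuter := funext₃ hγ
  obtain rfl : ρ = linearAnsatz ω rhoDiag rhoOuter := funext₃ hρ
  refine ⟨fun A hx i j => ?_, fun A hx i j a => ?_⟩
  · exact (hasFDerivAt_linearAnsatz (hasDerivAt_rhoDiag hx).differentiableAt
      (hasDerivAt_rhoOuter hx).differentiableAt i j).differentiableAt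
  · obtain ⟨h₁, h₂, h₃⟩ := secondMaster_coefficients_eq_zero hx
    exact secondMaster_linearAnsatz rfl (hasDerivAt_gammaDiag hx).differentiableAt
      (hasDerivAt_gammaOuter hx).differentiableAt (hasDerivAt_rhoDiag hx).differentiableAt
      (hasDerivAt_rhoOuter hx).differentiableAt h₁ h₂ h₃ i j a
end
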